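/- (Defining sets have size at most four.) For every finite set P ⊆ U and every tile f ∈ QT(P), there exists a subset X ⊆ P with |X| ≤ 4 such that f is a tile of QT(X). -/

import Mathlib

/-- The unit square `U = [0,1) × [0,1)`. -/
def unitSq : Set (ℝ × ℝ) := Set.Ico (0 : ℝ) 1 ×ˢ Set.Ico (0 : ℝ) 1

/-- The square `[i/2^k, (i+1)/2^k) × [j/2^k, (j+1)/2^k)`. -/
def canSq (k : ℕ) (i j : ℤ) : Set (ℝ × ℝ) :=
  Set.Ico ((i : ℝ) / 2 ^ k) (((i : ℝ) + 1) / 2 ^ k) ×ˢ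
    Set.Ico ((j : ℝ) / 2 ^ k) (((j : ℝ) + 1) / 2 ^ k)

/-- `σ` is a canonical square of side length `2⁻ᵏ`: it has the form
`[i/2^k, (i+1)/2^k) × [j/2^k, (j+1)/2^k)` with `0 ≤ i, j < 2^k`
(so it is contained in the unit square). -/
def IsCanSqSide (k : ℕ) (σ : Set (ℝ × ℝ)) : Prop :=
  ∃ i j : ℤ, 0 ≤ i ∧ i < 2 ^ k ∧ 0 ≤ j ∧ j < 2 ^ k ∧ σ = canSq k i j

/-- `σ` is a canonical square. -/
def IsCanSq (σ : Set (ℝ × ℝ)) : Prop := ∃ k : ℕ, IsCanSqSide k σ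

/-- `q` is one of the four quadrants of the canonical square `σ`: if `σ` has side
length `2⁻ᵏ`, the quadrants are the canonical squares of side length `2⁻⁽ᵏ⁺¹⁾`
contained in `σ`. -/
def IsQuadrantOf (q σ : Set (ℝ × ℝ)) : Prop :=
  ∃ k : ℕ, IsCanSqSide k σ ∧ IsCanSqSide (k + 1) q ∧ q ⊆ σ

/-- `σ` is the smallest canonical square containing `S`: it is a canonical square,
it contains `S`, and it is contained in every canonical square containing `S`. -/
def IsSmallestCanSq (S σ : Set (ℝ × ℝ)) : Prop :=
  IsCanSq σ ∧ S ⊆ σ ∧ ∀ τ : Set (ℝ × ℝ), IsCanSq τ → S ⊆ τ → σ ⊆ τ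

open scoped Classical

/-- `smallestCanSq S`: the smallest canonical square containing `S` (junk value `∅` if none exists). -/
noncomputable def smallestCanSq (S : Set (ℝ × ℝ)) : Set (ℝ × ℝ) :=
  if h : ∃ σ : Set (ℝ × ℝ), IsSmallestCanSq S σ then h.choose else ∅

/-- A canonical square `σ` is critical for `P` if at least two of its four
quadrants contain a point of `P`. -/
def Critical (P σ : Set (ℝ × ℝ)) : Prop :=
  IsCanSq σ ∧ ∃ q₁ q₂ : Set (ℝ × ℝ), IsQuadrantOf q₁ σ ∧ IsQuadrantOf q₂ σ ∧
    q₁ ≠ q₂ ∧ (P ∩ q₁).Nonempty ∧ (P ∩ q₂).Nonempty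

/-- The tiles of the compressed quadtree map `QT(P)`: (i) `U` itself if `|P| ≤ 1`;
(ii) the annulus `U \ sq(P)` if `|P| ≥ 2` and `sq(P) ≠ U`; (iii) for every
canonical square `σ` critical for `P` and every quadrant `q` of `σ`: the square
`q` if `|P ∩ q| ≤ 1`, and the annulus `q \ sq(P ∩ q)` if `|P ∩ q| ≥ 2` and
`sq(P ∩ q) ≠ q`. -/
noncomputable def QT (P : Set (ℝ × ℝ)) : Set (Set (ℝ × ℝ)) :=
  {f | (P.ncard ≤ 1 ∧ f = unitSq)
    ∨ (2 ≤ P.ncard ∧ smallestCanSq P ≠ unitSq ∧ f = unitSq \ smallestCanSq P)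
    ∨ (∃ σ q : Set (ℝ × ℝ), Critical P σ ∧ IsQuadrantOf q σ ∧
        (((P ∩ q).ncard ≤ 1 ∧ f = q)
          ∨ (2 ≤ (P ∩ q).ncard ∧ smallestCanSq (P ∩ q) ≠ q ∧ f = q \ smallestCanSq (P ∩ q))))}

/-! Canonical squares of two levels are nested or disjoint: a point lies in the square
`canSq k i j` iff the integer parts of its coordinates times `2ᵏ` are `i` and `j`, and those at a
level `l ≤ k` are the ones at level `k` divided by `2ᵏ⁻ˡ`. Hence, for any `x ∈ S`, the smallest
canonical square of `S` is already that of `{x, y}` for any `y ∈ S` outside the square of the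
next level around `x`, and so of every set between `{x, y}` and `S`. So a tile `q` or
`q \ sq(S)` is determined by at most two points of `S`; a tile below a critical square `σ` needs
in addition two points witnessing that `σ` is critical.
-/

open Set

lemma mem_Ico_div_two_pow_iff {t : ℝ} {k : ℕ} {i : ℤ} :
    t ∈ Ico ((i : ℝ) / 2 ^ k) (((i : ℝ) + 1) / 2 ^ k) ↔ ⌊t * 2 ^ k⌋ = i := by
  rw [Int.floor_eq_iff, mem_Ico, div_le_iff₀ (by positivity), lt_div_iff₀ (by positivity)]

lemma mem_canSq_iff {x : ℝ × ℝ} {k : ℕ} {i j : ℤ} :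
    x ∈ canSq k i j ↔ ⌊x.1 * 2 ^ k⌋ = i ∧ ⌊x.2 * 2 ^ k⌋ = j := by
  rw [canSq, mem_prod, mem_Ico_div_two_pow_iff, mem_Ico_div_two_pow_iff]

lemma floor_mul_two_pow_of_le (t : ℝ) {k l : ℕ} (hlk : l ≤ k) :
    ⌊t * 2 ^ l⌋ = ⌊t * 2 ^ k⌋ / 2 ^ (k - l) := by
  have h : t * 2 ^ l = t * 2 ^ k / ((2 ^ (k - l) : ℕ) : ℝ) := by
    rw [eq_div_iff (by positivity), Nat.cast_pow, Nat.cast_ofNat, mul_assoc, ← pow_add,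
      Nat.add_sub_cancel' hlk]
  rw [h, Int.floor_div_natCast, Nat.cast_pow, Nat.cast_ofNat]

lemma canSq_subset_of_le {k l : ℕ} {i j m n : ℤ} (hlk : l ≤ k)
    (hne : (canSq k i j ∩ canSq l m n).Nonempty) : canSq k i j ⊆ canSq l m n := by
  obtain ⟨x, hxk, hxl⟩ := hne
  intro y hy
  rw [mem_canSq_iff] at hxk hxl hy ⊢
  rw [floor_mul_two_pow_of_le _ hlk, floor_mul_two_pow_of_le y.2 hlk, hy.1, hy.2, ← hxk.1,
    ← hxk.2, ← floor_mul_two_pow_of_le _ hlk, ← floor_mul_two_pow_of_le _ hlk]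
  exact hxl

lemma le_of_canSq_subset {k l : ℕ} {i j m n : ℤ} (h : canSq k i j ⊆ canSq l m n) : l ≤ k := by
  have hk : (0 : ℝ) < 2 ^ k := by positivity
  have hl : (0 : ℝ) < 2 ^ l := by positivity
  have hlt : ∀ {a : ℤ} {p : ℕ}, (a : ℝ) / 2 ^ p < ((a : ℝ) + 1) / 2 ^ p := fun {a p} =>
    div_lt_div_of_pos_right (lt_add_one _) (by positivity)
  obtain ⟨⟨hleft, hright⟩, -⟩ := (prod_subset_prod_iff' ((nonempty_Ico.2 hlt).prod
    (nonempty_Ico.2 hlt))).1 h |>.imp (Ico_subset_Ico_iff hlt).1 id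
  have hwidth : (1 : ℝ) / 2 ^ k ≤ 1 / 2 ^ l := by
    have : ((i : ℝ) + 1) / 2 ^ k - i / 2 ^ k ≤ ((m : ℝ) + 1) / 2 ^ l - m / 2 ^ l := by linarith
    rwa [← sub_div, ← sub_div, add_sub_cancel_left, add_sub_cancel_left] at this
  rw [one_div_le_one_div hk hl] at hwidth
  exact (pow_le_pow_iff_right₀ one_lt_two).1 hwidth

lemma floor_mul_two_pow_nonneg_and_lt {t : ℝ} (ht : t ∈ Ico (0 : ℝ) 1) (k : ℕ) :
    0 ≤ ⌊t * 2 ^ k⌋ ∧ ⌊t * 2 ^ k⌋ < 2 ^ k := by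
  refine ⟨Int.floor_nonneg.2 (mul_nonneg ht.1 (by positivity)), Int.floor_lt.2 ?_⟩
  push_cast
  exact mul_lt_of_lt_one_left (by positivity) ht.2

lemma exists_lt_of_floor_mul_two_pow_eq {a b : ℝ} (hab : a ≠ b) :
    ∃ N : ℕ, ∀ l : ℕ, ⌊a * 2 ^ l⌋ = ⌊b * 2 ^ l⌋ → l < N := by
  have hd : 0 < |a - b| := abs_pos.2 (sub_ne_zero.2 hab)
  obtain ⟨N, hN⟩ := pow_unbounded_of_one_lt (1 / |a - b|) one_lt_two
  refine ⟨N, fun l hl => (pow_lt_pow_iff_right₀ (one_lt_two (α := ℝ))).1 ?_⟩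
  have hclose := Int.abs_sub_lt_one_of_floor_eq_floor hl
  rw [← sub_mul, abs_mul, abs_of_pos (by positivity : (0 : ℝ) < 2 ^ l)] at hclose
  rw [div_lt_iff₀ hd] at hN
  exact lt_of_mul_lt_mul_left (by linarith) hd.le

namespace IsCanSqSide

variable {k l : ℕ} {σ τ : Set (ℝ × ℝ)}

lemma subset_of_le (hlk : l ≤ k) (hσ : IsCanSqSide k σ) (hτ : IsCanSqSide l τ)
    (hne : (σ ∩ τ).Nonempty) : σ ⊆ τ := by
  obtain ⟨i, j, -, -, -, -, rfl⟩ := hσ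
  obtain ⟨m, n, -, -, -, -, rfl⟩ := hτ
  exact canSq_subset_of_le hlk hne

lemma le_of_subset (hσ : IsCanSqSide k σ) (hτ : IsCanSqSide l τ) (h : σ ⊆ τ) : l ≤ k := by
  obtain ⟨i, j, -, -, -, -, rfl⟩ := hσ
  obtain ⟨m, n, -, -, -, -, rfl⟩ := hτ
  exact le_of_canSq_subset h

lemma floor_eq {x y : ℝ × ℝ} (hσ : IsCanSqSide k σ) (hx : x ∈ σ) (hy : y ∈ σ) :
    ⌊x.1 * 2 ^ k⌋ = ⌊y.1 * 2 ^ k⌋ ∧ ⌊x.2 * 2 ^ k⌋ = ⌊y.2 * 2 ^ k⌋ := by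
  obtain ⟨i, j, -, -, -, -, rfl⟩ := hσ
  rw [mem_canSq_iff] at hx hy
  exact ⟨hx.1.trans hy.1.symm, hx.2.trans hy.2.symm⟩

end IsCanSqSide

lemma isCanSqSide_zero_unitSq : IsCanSqSide 0 unitSq :=
  ⟨0, 0, le_rfl, by norm_num, le_rfl, by norm_num, by simp [unitSq, canSq]⟩

lemma exists_isCanSqSide_mem (k : ℕ) {x : ℝ × ℝ} (hx : x ∈ unitSq) :
    ∃ σ, IsCanSqSide k σ ∧ x ∈ σ := by
  obtain ⟨hi₀, hi₁⟩ := floor_mul_two_pow_nonneg_and_lt hx.1 k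
  obtain ⟨hj₀, hj₁⟩ := floor_mul_two_pow_nonneg_and_lt hx.2 k
  exact ⟨_, ⟨_, _, hi₀, hi₁, hj₀, hj₁, rfl⟩, mem_canSq_iff.2 ⟨rfl, rfl⟩⟩

lemma exists_level_lt_of_ne {x y : ℝ × ℝ} (hxy : x ≠ y) :
    ∃ N : ℕ, ∀ l σ, IsCanSqSide l σ → x ∈ σ → y ∈ σ → l < N := by
  rcases eq_or_ne x.1 y.1 with h | h
  · obtain ⟨N, hN⟩ := exists_lt_of_floor_mul_two_pow_eq fun h₂ => hxy (Prod.ext h h₂)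
    exact ⟨N, fun l σ hσ hx hy => hN l (hσ.floor_eq hx hy).2⟩
  · obtain ⟨N, hN⟩ := exists_lt_of_floor_mul_two_pow_eq h
    exact ⟨N, fun l σ hσ hx hy => hN l (hσ.floor_eq hx hy).1⟩

lemma exists_isSmallestCanSq {S : Set (ℝ × ℝ)} (hSU : S ⊆ unitSq) {x y : ℝ × ℝ}
    (hx : x ∈ S) (hy : y ∈ S) (hxy : x ≠ y) : ∃ σ, IsSmallestCanSq S σ := by
  obtain ⟨N, hN⟩ := exists_level_lt_of_ne hxy
  let Q : ℕ → Prop := fun l => ∃ σ, IsCanSqSide l σ ∧ S ⊆ σ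
  obtain ⟨σ, hσ, hSσ⟩ : Q (Nat.findGreatest Q N) :=
    Nat.findGreatest_spec (Nat.zero_le N) ⟨unitSq, isCanSqSide_zero_unitSq, hSU⟩
  refine ⟨σ, ⟨_, hσ⟩, hSσ, fun τ ⟨l, hτ⟩ hSτ => hσ.subset_of_le ?_ hτ ⟨x, hSσ hx, hSτ hx⟩⟩
  exact Nat.le_findGreatest (hN l τ hτ (hSτ hx) (hSτ hy)).le ⟨τ, hτ, hSτ⟩

namespace IsSmallestCanSq

variable {S T σ : Set (ℝ × ℝ)}

lemma smallestCanSq_eq (h : IsSmallestCanSq S σ) : smallestCanSq S = σ := by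
  have hex : ∃ τ, IsSmallestCanSq S τ := ⟨σ, h⟩
  rw [smallestCanSq, dif_pos hex]
  exact (hex.choose_spec.2.2 σ h.1 h.2.1).antisymm (h.2.2 _ hex.choose_spec.1 hex.choose_spec.2.1)

lemma of_subset (h : IsSmallestCanSq T σ) (hTS : T ⊆ S) (hSσ : S ⊆ σ) : IsSmallestCanSq S σ :=
  ⟨h.1, hSσ, fun τ hτ hSτ => h.2.2 τ hτ (hTS.trans hSτ)⟩

lemma exists_pair (hSU : S ⊆ unitSq) (h : IsSmallestCanSq S σ) {x : ℝ × ℝ} (hx : x ∈ S) :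
    ∃ y ∈ S, x ≠ y ∧ IsSmallestCanSq {x, y} σ := by
  obtain ⟨⟨k, hσ⟩, hSσ, hmin⟩ := h
  obtain ⟨q, hq, hxq⟩ := exists_isCanSqSide_mem (k + 1) (hSU hx)
  obtain ⟨y, hyS, hyq⟩ : ∃ y ∈ S, y ∉ q := by
    by_contra! hSq
    have := hσ.le_of_subset hq (hmin q ⟨k + 1, hq⟩ hSq)
    omega
  refine ⟨y, hyS, fun hxy => hyq (hxy ▸ hxq), ⟨k, hσ⟩,
    insert_subset (hSσ hx) (singleton_subset_iff.2 (hSσ hyS)), fun τ ⟨l, hτ⟩ hxyτ => ?_⟩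
  have hxτ : x ∈ τ := hxyτ (mem_insert x _)
  by_cases hlk : l ≤ k
  · exact hσ.subset_of_le hlk hτ ⟨x, hSσ hx, hxτ⟩
  · exact absurd (hτ.subset_of_le (by omega) hq ⟨x, hxτ, hxq⟩ (hxyτ (mem_insert_of_mem x rfl))) hyq

end IsSmallestCanSq

lemma exists_pair_smallestCanSq_eq {S : Set (ℝ × ℝ)} (hSU : S ⊆ unitSq) (hS : 2 ≤ S.ncard) :
    ∃ a b, a ≠ b ∧ {a, b} ⊆ S ∧
      ∀ T, {a, b} ⊆ T → T ⊆ S → smallestCanSq T = smallestCanSq S := by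
  obtain ⟨x, y, hx, hy, hxy⟩ := (one_lt_ncard_iff (finite_of_ncard_pos (by omega))).1 hS
  obtain ⟨σ, hσ⟩ := exists_isSmallestCanSq hSU hx hy hxy
  obtain ⟨b, hb, hxb, hpair⟩ := hσ.exists_pair hSU hx
  refine ⟨x, b, hxb, insert_subset hx (singleton_subset_iff.2 hb), fun T habT hTS => ?_⟩
  rw [hσ.smallestCanSq_eq, (hpair.of_subset habT (hTS.trans hσ.2.1)).smallestCanSq_eq]

namespace Critical

variable {P Q σ : Set (ℝ × ℝ)}

lemma mono (h : Critical P σ) (hPQ : P ⊆ Q) : Critical Q σ := by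
  obtain ⟨hσ, q₁, q₂, h₁, h₂, hne, hP₁, hP₂⟩ := h
  exact ⟨hσ, q₁, q₂, h₁, h₂, hne, hP₁.mono (inter_subset_inter_left _ hPQ),
    hP₂.mono (inter_subset_inter_left _ hPQ)⟩

lemma exists_pair (h : Critical P σ) : ∃ p₁ ∈ P, ∃ p₂ ∈ P, Critical {p₁, p₂} σ := by
  obtain ⟨hσ, q₁, q₂, h₁, h₂, hne, ⟨p₁, hp₁P, hp₁q⟩, ⟨p₂, hp₂P, hp₂q⟩⟩ := h
  exact ⟨p₁, hp₁P, p₂, hp₂P, hσ, q₁, q₂, h₁, h₂, hne, ⟨p₁, mem_insert _ _, hp₁q⟩,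
    ⟨p₂, mem_insert_of_mem _ rfl, hp₂q⟩⟩

end Critical

lemma ncard_insert_insert_le {α : Type*} (a b : α) (s : Set α) :
    (insert a (insert b s)).ncard ≤ s.ncard + 2 :=
  (ncard_insert_le a _).trans (by have := ncard_insert_le b s; omega)

def IsTileOf (S q f : Set (ℝ × ℝ)) : Prop :=
  (S.ncard ≤ 1 ∧ f = q) ∨ (2 ≤ S.ncard ∧ smallestCanSq S ≠ q ∧ f = q \ smallestCanSq S)

lemma mem_QT_iff {P f : Set (ℝ × ℝ)} :
    f ∈ QT P ↔
      IsTileOf P unitSq f ∨ ∃ σ q, Critical P σ ∧ IsQuadrantOf q σ ∧ IsTileOf (P ∩ q) q f :=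
  or_assoc.symm

lemma IsTileOf.exists_defining_subset {S q f : Set (ℝ × ℝ)} (hSU : S ⊆ unitSq)
    (h : IsTileOf S q f) :
    ∃ T ⊆ S, T.ncard ≤ 2 ∧ ∀ Y, T ⊆ Y → Y ⊆ S → IsTileOf Y q f := by
  rcases h with ⟨hS, hf⟩ | ⟨hS, hsq, hf⟩
  · exact ⟨S, subset_rfl, hS.trans one_le_two, fun Y hSY hYS => Or.inl ⟨hYS.antisymm hSY ▸ hS, hf⟩⟩
  obtain ⟨a, b, hab, habS, hsq_eq⟩ := exists_pair_smallestCanSq_eq hSU hS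
  refine ⟨{a, b}, habS, (ncard_pair hab).le, fun Y habY hYS => Or.inr ⟨?_, ?_⟩⟩
  · exact (ncard_pair hab).ge.trans
      (ncard_le_ncard habY ((finite_of_ncard_pos (by omega)).subset hYS))
  · rw [hsq_eq Y habY hYS]
    exact ⟨hsq, hf⟩

theorem QT_defining_set_le_four_general (P : Set (ℝ × ℝ))
    (hPU : P ⊆ unitSq) (f : Set (ℝ × ℝ)) (hf : f ∈ QT P) :
    ∃ X : Set (ℝ × ℝ), X ⊆ P ∧ X.ncard ≤ 4 ∧ f ∈ QT X := by
  rcases mem_QT_iff.1 hf with hf | ⟨σ, q, hσ, hq, hf⟩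
  · obtain ⟨T, hTP, hT, hTf⟩ := hf.exists_defining_subset hPU
    exact ⟨T, hTP, hT.trans (by norm_num), mem_QT_iff.2 (Or.inl (hTf T subset_rfl hTP))⟩
  obtain ⟨p₁, hp₁, p₂, hp₂, hσ₁₂⟩ := hσ.exists_pair
  obtain ⟨T, hTPq, hT, hTf⟩ := hf.exists_defining_subset (inter_subset_left.trans hPU)
  set X : Set (ℝ × ℝ) := insert p₁ (insert p₂ T)
  have hXP : X ⊆ P := insert_subset hp₁ (insert_subset hp₂ (hTPq.trans inter_subset_left))
  have hXσ : Critical X σ :=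
    hσ₁₂.mono (insert_subset_insert (singleton_subset_iff.2 (mem_insert p₂ T)))
  have hTX : T ⊆ X ∩ q :=
    subset_inter ((subset_insert _ _).trans (subset_insert _ _)) (hTPq.trans inter_subset_right)
  exact ⟨X, hXP, (ncard_insert_insert_le _ _ _).trans (by omega),
    mem_QT_iff.2 (Or.inr ⟨σ, q, hXσ, hq, hTf _ hTX (inter_subset_inter_left q hXP)⟩)⟩

/-- Defining sets have size at most four: for every tile `f ∈ QT(P)` there is a
subset `X ⊆ P` with `|X| ≤ 4` such that `f` is a tile of `QT(X)`. -/
theorem QT_defining_set_le_four (P : Set (ℝ × ℝ)) (hfin : P.Finite)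
    (hPU : P ⊆ unitSq) (f : Set (ℝ × ℝ)) (hf : f ∈ QT P) :
    ∃ X : Set (ℝ × ℝ), X ⊆ P ∧ X.ncard ≤ 4 ∧ f ∈ QT X :=
  QT_defining_set_le_four_general P hPU f hf
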